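/- arXiv:2210.00880 — 3 statements merged into one kernel-verified Lean document; each statement's English description precedes it below -/
import Mathlib

section
/- Let m : ℤⁿ → ℝ satisfy, for some A, δ, n, and 0 < ε < 1, the bound m(k) ≤ −(4n/δ²)(1−ε) log‖ν_k‖ for all ‖ν_k‖ ≥ N, with ν_k proportional to k componentwise and A‖k‖ ≤ ‖ν_k‖. Then for fixed t > 0, the quantity (1+‖k‖²)^{(4nt/δ²)(1−ε)} e^{2m(k)t} is bounded over k ∈ ℤⁿ with ‖ν_k‖ ≥ N. -/
/-- The Euclidean norm of a multi-index `k ∈ ℤⁿ`. -/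
noncomputable def normk {n : ℕ} (k : Fin n → ℤ) : ℝ :=
  Real.sqrt (∑ i, ((k i : ℝ)) ^ 2)

lemma normk_nonneg {n : ℕ} (k : Fin n → ℤ) : 0 ≤ normk k := Real.sqrt_nonneg _

lemma one_le_normk_of_ne {n : ℕ} (k : Fin n → ℤ) (hk : k ≠ 0) : 1 ≤ normk k := by
  obtain ⟨i, hi⟩ := Function.ne_iff.mp hk
  have hi' : (1 : ℝ) ≤ ((k i : ℝ)) ^ 2 := by
    have : (1 : ℤ) ≤ (k i) ^ 2 := by
      rcases lt_or_gt_of_ne (show k i ≠ 0 from hi) with h | h <;> nlinarith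
    exact_mod_cast this
  have hsum : (1 : ℝ) ≤ ∑ j, ((k j : ℝ)) ^ 2 := by
    refine hi'.trans ?_
    exact Finset.single_le_sum (f := fun j => ((k j : ℝ)) ^ 2) (fun j _ => sq_nonneg _) (Finset.mem_univ i)
  exact Real.one_le_sqrt.mpr hsum

/-- key estimate for the gradual smoothing case `β = n`:
logarithmic decay of the multipliers gives boundedness of
`(1+‖k‖²)^{(4nt/δ²)(1−ε)} e^{2m(k)t}` over the large frequencies. -/
theorem log_decay_sobolev_gain {n : ℕ} (A δ N t ε : ℝ)
    (hA : 0 < A) (hδ : 0 < δ) (ht : 0 < t) (hε₁ : 0 < ε) (hε₂ : ε < 1)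
    (m : (Fin n → ℤ) → ℝ) (nu : (Fin n → ℤ) → ℝ)
    (hnu : ∀ k, A * normk k ≤ nu k)
    (hm : ∀ k, N ≤ nu k → m k ≤ -(4 * (n : ℝ) / δ ^ 2) * (1 - ε) * Real.log (nu k)) :
    ∃ M : ℝ, ∀ k, N ≤ nu k →
      (1 + normk k ^ 2) ^ (4 * (n : ℝ) * t / δ ^ 2 * (1 - ε)) *
        Real.exp (2 * m k * t) ≤ M := by
  set C : ℝ := 4 * (n : ℝ) / δ ^ 2 * (1 - ε) with hCdef
  have hε' : 0 < 1 - ε := by linarith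
  have hC0 : 0 ≤ C := by positivity
  have hCt0 : 0 ≤ C * t := mul_nonneg hC0 ht.le
  refine ⟨max ((2 / A ^ 2) ^ (C * t)) (Real.exp (2 * m 0 * t)), fun k hk => ?_⟩
  by_cases hk0 : k = 0
  · subst hk0
    have h0 : normk (0 : Fin n → ℤ) = 0 := by simp [normk]
    rw [h0]
    norm_num
  · have h1 : 1 ≤ normk k := one_le_normk_of_ne k hk0
    have hν : A * normk k ≤ nu k := hnu k
    have hνpos : 0 < nu k := lt_of_lt_of_le (by nlinarith) hν
    have hmk := hm k hk
    have hexp : Real.exp (2 * m k * t) ≤ (nu k) ^ (-(2 * (C * t))) := by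
      rw [Real.rpow_def_of_pos hνpos]
      apply Real.exp_le_exp.mpr
      have hlog : m k ≤ -C * Real.log (nu k) := by
        calc m k ≤ -(4 * (n : ℝ) / δ ^ 2) * (1 - ε) * Real.log (nu k) := hmk
        _ = -C * Real.log (nu k) := by rw [hCdef]; ring
      nlinarith [mul_le_mul_of_nonneg_right hlog ht.le]
    have hbase : 1 + normk k ^ 2 ≤ 2 / A ^ 2 * (nu k) ^ 2 := by
      have hA2 : (0 : ℝ) < A ^ 2 := by positivity
      have h0' : 0 ≤ A * normk k := by positivity
      have hsq : A ^ 2 * normk k ^ 2 ≤ (nu k) ^ 2 := by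
        have := pow_le_pow_left₀ h0' hν 2
        nlinarith
      have h1sq : 1 ≤ normk k ^ 2 := by nlinarith
      rw [div_mul_eq_mul_div, le_div_iff₀ hA2]
      nlinarith [hsq, h1sq, hA2]
    have hbpos : (0 : ℝ) < 1 + normk k ^ 2 := by positivity
    calc (1 + normk k ^ 2) ^ (4 * (n : ℝ) * t / δ ^ 2 * (1 - ε)) * Real.exp (2 * m k * t)
        = (1 + normk k ^ 2) ^ (C * t) * Real.exp (2 * m k * t) := by
          rw [show 4 * (n : ℝ) * t / δ ^ 2 * (1 - ε) = C * t by rw [hCdef]; ring]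
      _ ≤ (2 / A ^ 2 * (nu k) ^ 2) ^ (C * t) * ((nu k) ^ (-(2 * (C * t)))) := by
          apply mul_le_mul _ hexp (Real.exp_pos _).le (Real.rpow_nonneg (by positivity) _)
          exact Real.rpow_le_rpow hbpos.le hbase hCt0
      _ = (2 / A ^ 2) ^ (C * t) * ((nu k) ^ (2 * (C * t)) * (nu k) ^ (-(2 * (C * t)))) := by
          rw [Real.mul_rpow (by positivity) (by positivity)]
          rw [← Real.rpow_natCast (nu k) 2, ← Real.rpow_mul hνpos.le]
          push_cast
          ring_nf
      _ = (2 / A ^ 2) ^ (C * t) := by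
          rw [← Real.rpow_add hνpos]
          norm_num
      _ ≤ max ((2 / A ^ 2) ^ (C * t)) (Real.exp (2 * m 0 * t)) := le_max_left _ _
end

section
/- Let n < β < n+2 and 0 < δ ≤ 1. Then there exist constants c₁ > 0 and c₂ > 0 (independent of δ) such that for all ν ∈ ℝⁿ, m^{δ,β}(ν) ≤ max{−c₁‖ν‖^{β−n}, −c₂‖ν‖²}. -/
open MeasureTheory

/-- The peridynamic scaling constant `c^{δ,β}`. -/
noncomputable def pdConst (n : ℕ) (δ β : ℝ) : ℝ :=
  2 * ((n : ℝ) + 2 - β) * Real.Gamma ((n : ℝ) / 2 + 1) /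
    (Real.pi ^ ((n : ℝ) / 2) * δ ^ ((n : ℝ) + 2 - β))

/-- The Fourier multiplier `m^{δ,β}(ν)` of the nonlocal Laplacian. -/
noncomputable def pdMultiplier (n : ℕ) (δ β : ℝ) (ν : EuclideanSpace ℝ (Fin n)) : ℝ :=
  pdConst n δ β *
    ∫ z in Metric.ball (0 : EuclideanSpace ℝ (Fin n)) δ,
      (Real.cos (inner ℝ ν z) - 1) / ‖z‖ ^ β

/-! The integrand `(cos ⟪ν, z⟫ - 1) / ‖z‖ ^ β` is nonpositive, so shrinking the ball to a radius
`r ≤ δ` with `r ‖ν‖ ≤ π` can only increase the integral, and on the small ball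
`cos t - 1 ≤ -(2 / π²) t²`. By rotation invariance and homogeneity the quadratic moment
`∫_{B_r} ⟪ν, z⟫² / ‖z‖ ^ β` is `‖ν‖² r ^ (n + 2 - β)` times a fixed positive constant, and
`c^{δ,β}` is proportional to `δ ^ (-(n + 2 - β))`; hence
`m^{δ,β}(ν) ≤ -c ‖ν‖² (r / δ) ^ (n + 2 - β)`.
Taking `r = δ` when `δ ‖ν‖ ≤ 1` and `r = ‖ν‖⁻¹` otherwise gives the two branches of the bound. -/

open Metric Module Real
open scoped RealInnerProductSpace

section Homogeneous

variable {E : Type*} [NormedAddCommGroup E] [NormedSpace ℝ E] [FiniteDimensional ℝ E]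
  [MeasurableSpace E] [BorelSpace E] (μ : Measure E) [μ.IsAddHaarMeasure]

theorem setIntegral_ball_eq_rpow_mul_of_homogeneous {G : E → ℝ} {k r : ℝ} (hr : 0 < r)
    (hG : ∀ x, G (r • x) = r ^ k * G x) :
    ∫ z in ball 0 r, G z ∂μ = r ^ (finrank ℝ E + k) * ∫ z in ball 0 1, G z ∂μ := by
  have h := μ.setIntegral_comp_smul_of_pos G (ball 0 1) hr
  rw [smul_unitBall_of_pos hr] at h
  simp only [hG, integral_const_mul, smul_eq_mul] at h
  rw [Real.rpow_add hr, Real.rpow_natCast, mul_assoc, h, ← mul_assoc,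
    mul_inv_cancel₀ (by positivity), one_mul]

end Homogeneous

section InnerProduct

variable {E : Type*} [NormedAddCommGroup E] [InnerProductSpace ℝ E]

theorem abs_real_inner_sq_le (u z : E) : |⟪u, z⟫ ^ 2| ≤ ‖u‖ ^ 2 * ‖z‖ ^ 2 := by
  rw [abs_pow, ← mul_pow]
  exact pow_le_pow_left₀ (abs_nonneg _) (abs_real_inner_le_norm u z) 2

theorem abs_cos_inner_sub_one_le (ν z : E) :
    |cos ⟪ν, z⟫ - 1| ≤ ‖ν‖ ^ 2 / 2 * ‖z‖ ^ 2 := by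
  have h := one_sub_sq_div_two_le_cos (x := ⟪ν, z⟫)
  have hν := (le_abs_self _).trans (abs_real_inner_sq_le ν z)
  rw [abs_of_nonpos (sub_nonpos.2 (cos_le_one _))]
  linarith

variable [FiniteDimensional ℝ E] [MeasurableSpace E] [BorelSpace E]

theorem integrableOn_ball_div_rpow_norm (μ : Measure E) [μ.IsAddHaarMeasure]
    (hd : 1 ≤ finrank ℝ E) {β C : ℝ} (hβ : β < finrank ℝ E + 2) {g : E → ℝ} (hg : Continuous g)
    (hgC : ∀ z, |g z| ≤ C * ‖z‖ ^ 2) (r : ℝ) :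
    IntegrableOn (fun z => g z / ‖z‖ ^ β) (ball 0 r) μ := by
  have : Nontrivial E := Module.nontrivial_of_finrank_pos (R := ℝ) hd
  refine integrableOn_ball_of_norm_le_rpow hd (α := β - 2) (C := C) (by linarith) ?_
    (hg.measurable.div (measurable_norm.pow_const β)).aestronglyMeasurable
  refine ae_restrict_of_ae ?_
  filter_upwards [compl_mem_ae_iff.2 (measure_singleton (μ := μ) 0)] with z hz
  have hz : 0 < ‖z‖ := norm_pos_iff.2 hz
  rw [norm_div, Real.norm_eq_abs, Real.norm_of_nonneg (by positivity), neg_sub,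
    Real.rpow_sub hz, Real.rpow_two, ← mul_div_assoc]
  gcongr
  exact hgC z

theorem setIntegral_ball_comp_inner_eq_of_norm_eq {u e : E} (h : ‖u‖ = ‖e‖) (F : ℝ → ℝ → ℝ)
    (r : ℝ) : ∫ z in ball 0 r, F ⟪u, z⟫ ‖z‖ = ∫ z in ball 0 r, F ⟪e, z⟫ ‖z‖ := by
  set ρ := Submodule.reflection (ℝ ∙ (u - e))ᗮ
  have hρu : ρ u = e := Submodule.reflection_sub h
  have hpre : ρ ⁻¹' ball 0 r = ball 0 r := by ext; simp
  calc ∫ z in ball 0 r, F ⟪u, z⟫ ‖z‖ = ∫ z in ρ ⁻¹' ball 0 r, F ⟪e, ρ z⟫ ‖ρ z‖ := by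
        simp only [hpre, ← hρu, LinearIsometryEquiv.inner_map_map, LinearIsometryEquiv.norm_map]
    _ = _ := ρ.measurePreserving.setIntegral_preimage_emb
        ρ.toHomeomorph.measurableEmbedding (fun w => F ⟪e, w⟫ ‖w‖) _

theorem setIntegral_ball_inner_sq_div_rpow {e : E} (he : ‖e‖ = 1) (ν : E) (β : ℝ) {r : ℝ}
    (hr : 0 < r) :
    ∫ z in ball 0 r, ⟪ν, z⟫ ^ 2 / ‖z‖ ^ β =
      ‖ν‖ ^ 2 * r ^ (finrank ℝ E + 2 - β) * ∫ z in ball 0 1, ⟪e, z⟫ ^ 2 / ‖z‖ ^ β := by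
  have hν : ‖ν‖ = ‖‖ν‖ • e‖ := by simp [norm_smul, he]
  rw [setIntegral_ball_comp_inner_eq_of_norm_eq hν (fun t s => t ^ 2 / s ^ β)]
  simp only [real_inner_smul_left, mul_pow, mul_div_assoc, integral_const_mul]
  rw [setIntegral_ball_eq_rpow_mul_of_homogeneous volume (k := 2 - β) hr, add_sub_assoc, mul_assoc]
  intro x
  rw [real_inner_smul_right, norm_smul, Real.norm_of_nonneg hr.le,
    Real.mul_rpow hr.le (norm_nonneg _), mul_pow, mul_div_mul_comm, Real.rpow_sub hr, Real.rpow_two]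

theorem setIntegral_ball_inner_sq_div_rpow_pos (μ : Measure E) [μ.IsAddHaarMeasure] {β : ℝ}
    (hβ : β < finrank ℝ E + 2) {e : E} (he : e ≠ 0) :
    0 < ∫ z in ball 0 1, ⟪e, z⟫ ^ 2 / ‖z‖ ^ β ∂μ := by
  have hd : 1 ≤ finrank ℝ E := Module.finrank_pos_iff_exists_ne_zero.2 ⟨e, he⟩
  have hint := integrableOn_ball_div_rpow_norm μ hd hβ (by fun_prop) (abs_real_inner_sq_le e) 1
  rw [setIntegral_pos_iff_support_of_nonneg_ae (ae_of_all _ fun z => by positivity) hint]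
  set U := ball (0 : E) 1 ∩ {z | ⟪e, z⟫ ≠ 0}
  have hU : IsOpen U := isOpen_ball.inter (isOpen_ne_fun (by fun_prop) continuous_const)
  have hUne : U.Nonempty := by
    refine ⟨(2 * ‖e‖)⁻¹ • e, ?_, ?_⟩
    · rw [mem_ball_zero_iff, norm_smul, norm_inv, norm_mul, norm_norm,
        mul_inv, mul_assoc, inv_mul_cancel₀ (norm_ne_zero_iff.2 he)]
      norm_num
    · simp [real_inner_smul_right, he]
  refine (hU.measure_pos μ hUne).trans_le (measure_mono ?_)
  rintro z ⟨hzb, hz⟩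
  have hz0 : z ≠ 0 := by rintro rfl; simp at hz
  exact ⟨(div_pos (sq_pos_of_ne_zero hz) (Real.rpow_pos_of_pos (norm_pos_iff.2 hz0) _)).ne', hzb⟩

end InnerProduct

theorem pdConst_eq_div (n : ℕ) (δ β : ℝ) :
    pdConst n δ β = pdConst n 1 β / δ ^ ((n : ℝ) + 2 - β) := by
  simp only [pdConst, Real.one_rpow, mul_one, div_div]

section Multiplier

variable {n : ℕ} {β : ℝ}

theorem pdConst_pos (hβ : β < n + 2) {δ : ℝ} (hδ : 0 < δ) : 0 < pdConst n δ β := by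
  have hs : 0 < (n : ℝ) + 2 - β := by linarith
  have hΓ : 0 < Gamma ((n : ℝ) / 2 + 1) := Gamma_pos_of_pos (by positivity)
  unfold pdConst
  positivity

theorem pdMultiplier_le_neg_mul_rpow {e : EuclideanSpace ℝ (Fin n)} (he : ‖e‖ = 1)
    (hβ : β < n + 2) {δ r : ℝ} (hδ : 0 < δ) (hr : 0 < r) (hrδ : r ≤ δ)
    {ν : EuclideanSpace ℝ (Fin n)} (hrν : r * ‖ν‖ ≤ π) :
    pdMultiplier n δ β ν ≤ -(2 / π ^ 2 * pdConst n 1 β *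
      ∫ z in ball 0 1, ⟪e, z⟫ ^ 2 / ‖z‖ ^ β) * ‖ν‖ ^ 2 * (r / δ) ^ ((n : ℝ) + 2 - β) := by
  have hd : 1 ≤ finrank ℝ (EuclideanSpace ℝ (Fin n)) := Module.finrank_pos_iff_exists_ne_zero.2
    ⟨e, ne_zero_of_norm_ne_zero (he.trans_ne one_ne_zero)⟩
  have hβ' : β < finrank ℝ (EuclideanSpace ℝ (Fin n)) + 2 := by rwa [finrank_euclideanSpace_fin]
  set f : EuclideanSpace ℝ (Fin n) → ℝ := fun z => (cos ⟪ν, z⟫ - 1) / ‖z‖ ^ β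
  have hf_int : IntegrableOn f (ball 0 δ) :=
    integrableOn_ball_div_rpow_norm volume hd hβ' (by fun_prop) (abs_cos_inner_sub_one_le ν) δ
  have hQ_int : IntegrableOn (fun z => ⟪ν, z⟫ ^ 2 / ‖z‖ ^ β) (ball 0 r) :=
    integrableOn_ball_div_rpow_norm volume hd hβ' (by fun_prop) (abs_real_inner_sq_le ν) r
  have hf_nonpos : ∀ z, f z ≤ 0 := fun z =>
    div_nonpos_of_nonpos_of_nonneg (sub_nonpos.2 (cos_le_one _)) (by positivity)
  have h_shrink : ∫ z in ball 0 δ, f z ≤ ∫ z in ball 0 r, f z := by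
    have := setIntegral_mono_set hf_int.neg (ae_of_all _ fun z => neg_nonneg.2 (hf_nonpos z))
      (ball_subset_ball hrδ).eventuallyLE
    simpa only [Pi.neg_apply, integral_neg, neg_le_neg_iff] using this
  have h_quad : ∫ z in ball 0 r, f z ≤ ∫ z in ball 0 r, -(2 / π ^ 2) * (⟪ν, z⟫ ^ 2 / ‖z‖ ^ β) := by
    refine setIntegral_mono_on (hf_int.mono_set (ball_subset_ball hrδ)) (hQ_int.const_mul _)
      measurableSet_ball fun z hz => ?_
    have hνz : |⟪ν, z⟫| ≤ π := by
      refine (abs_real_inner_le_norm ν z).trans (hrν.trans' ?_)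
      rw [mul_comm]
      gcongr
      exact (mem_ball_zero_iff.1 hz).le
    rw [← mul_div_assoc]
    refine div_le_div_of_nonneg_right ?_ (by positivity)
    linarith [cos_le_one_sub_mul_cos_sq hνz]
  calc pdMultiplier n δ β ν = pdConst n δ β * ∫ z in ball 0 δ, f z := rfl
    _ ≤ pdConst n δ β * ∫ z in ball 0 r, -(2 / π ^ 2) * (⟪ν, z⟫ ^ 2 / ‖z‖ ^ β) :=
      mul_le_mul_of_nonneg_left (h_shrink.trans h_quad) (pdConst_pos hβ hδ).le
    _ = _ := by
      rw [integral_const_mul, setIntegral_ball_inner_sq_div_rpow he ν β hr,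
        finrank_euclideanSpace_fin, pdConst_eq_div n δ, div_rpow hr.le hδ.le]
      ring

end Multiplier

theorem rpow_two_sub_le_sq_mul_rpow {x δ s : ℝ} (hx : 0 < x) (hδ : 0 < δ) (hδ1 : δ ≤ 1)
    (hs : 0 ≤ s) : x ^ (2 - s) ≤ x ^ 2 * (x⁻¹ / δ) ^ s :=
  calc x ^ (2 - s) = x ^ 2 * x⁻¹ ^ s := by
        rw [rpow_sub hx, rpow_two, inv_rpow hx.le, div_eq_mul_inv]
    _ ≤ x ^ 2 * (x⁻¹ / δ) ^ s := by
        gcongr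
        exact le_div_self (by positivity) hδ hδ1

theorem pdMultiplier_upper_bound_general (n : ℕ) (hn : 1 ≤ n) (β : ℝ)
    (hβ₂ : β < (n : ℝ) + 2) :
    ∃ c₁ > (0 : ℝ), ∃ c₂ > (0 : ℝ), ∀ δ : ℝ, 0 < δ → δ ≤ 1 →
      ∀ ν : EuclideanSpace ℝ (Fin n),
        pdMultiplier n δ β ν ≤ max (-c₁ * ‖ν‖ ^ (β - (n : ℝ))) (-c₂ * ‖ν‖ ^ 2) := by
  obtain ⟨e, he⟩ : ∃ e : EuclideanSpace ℝ (Fin n), ‖e‖ = 1 :=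
    ⟨EuclideanSpace.single ⟨0, hn⟩ 1, by simp⟩
  set c := 2 / π ^ 2 * pdConst n 1 β * ∫ z in ball 0 1, ⟪e, z⟫ ^ 2 / ‖z‖ ^ β
  have hc : 0 < c := mul_pos (mul_pos (by positivity) (pdConst_pos hβ₂ one_pos))
    (setIntegral_ball_inner_sq_div_rpow_pos volume (by rwa [finrank_euclideanSpace_fin])
      (ne_zero_of_norm_ne_zero (he.trans_ne one_ne_zero)))
  refine ⟨c, hc, c, hc, fun δ hδ hδ1 ν => ?_⟩
  rcases le_or_gt (δ * ‖ν‖) 1 with hsmall | hlarge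
  · refine le_max_of_le_right ?_
    have := pdMultiplier_le_neg_mul_rpow he hβ₂ hδ hδ le_rfl
      (hsmall.trans (by linarith [pi_gt_three]))
    rwa [div_self hδ.ne', one_rpow, mul_one] at this
  · refine le_max_of_le_left ?_
    have hν : 0 < ‖ν‖ := pos_of_mul_pos_right (one_pos.trans hlarge) hδ.le
    have hr : ‖ν‖⁻¹ ≤ δ := by rw [inv_le_iff_one_le_mul₀ hν]; exact hlarge.le
    have hrν : ‖ν‖⁻¹ * ‖ν‖ ≤ π := by rw [inv_mul_cancel₀ hν.ne']; linarith [pi_gt_three]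
    have hpow := rpow_two_sub_le_sq_mul_rpow hν hδ hδ1 (s := n + 2 - β) (by linarith)
    rw [show 2 - ((n : ℝ) + 2 - β) = β - n by ring] at hpow
    refine (pdMultiplier_le_neg_mul_rpow he hβ₂ hδ (inv_pos.2 hν) hr hrν).trans ?_
    rw [mul_assoc, neg_mul, neg_mul, neg_le_neg_iff]
    exact mul_le_mul_of_nonneg_left hpow hc.le

/-- Lemma 3.6: for `n < β < n+2` there are constants `c₁, c₂ > 0`,
independent of `δ ∈ (0,1]`, with `m^{δ,β}(ν) ≤ max{−c₁‖ν‖^{β−n}, −c₂‖ν‖²}`. -/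
theorem pdMultiplier_upper_bound (n : ℕ) (hn : 1 ≤ n) (β : ℝ)
    (hβ₁ : (n : ℝ) < β) (hβ₂ : β < (n : ℝ) + 2) :
    ∃ c₁ > (0 : ℝ), ∃ c₂ > (0 : ℝ), ∀ δ : ℝ, 0 < δ → δ ≤ 1 →
      ∀ ν : EuclideanSpace ℝ (Fin n),
        pdMultiplier n δ β ν ≤ max (-c₁ * ‖ν‖ ^ (β - (n : ℝ))) (-c₂ * ‖ν‖ ^ 2) :=
  pdMultiplier_upper_bound_general n hn β hβ₂
end

section
/- Let b ∈ H^s(Tⁿ) with b̂₀ its zero Fourier coefficient and m(ν_k) < 0 for k ≠ 0 with |m(ν_k)| bounded below by a positive constant for large ‖k‖. Define U(t) = b̂₀ t + Σ_{k≠0} ((e^{m(ν_k)t} − 1)/m(ν_k)) b̂_k e^{iν_k·x}. Then for each t > 0, U(t) − b̂₀t ∈ H^s(Tⁿ), and if additionally |m(ν_k)| ≥ C‖k‖^{β−n} for some C > 0 and n < β, then U(t) − b̂₀t ∈ H^{s+β−n}(Tⁿ). -/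
lemma one_le_normk {n : ℕ} {k : Fin n → ℤ} (hk : k ≠ 0) : 1 ≤ normk k := by
  obtain ⟨i, hi⟩ : ∃ i, k i ≠ 0 := by
    by_contra h; push_neg at h; exact hk (funext h)
  have h1 : (1 : ℝ) ≤ ((k i : ℝ)) ^ 2 := by
    have h := Int.one_le_abs hi
    have h' : (1 : ℝ) ≤ |(k i : ℝ)| := by exact_mod_cast (by simpa using h)
    calc (1:ℝ) = 1^2 := by ring
      _ ≤ |(k i : ℝ)|^2 := by exact pow_le_pow_left₀ (by norm_num) h' 2
      _ = ((k i : ℝ))^2 := sq_abs _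
  have h2 : (1 : ℝ) ≤ ∑ j, ((k j : ℝ)) ^ 2 :=
    h1.trans (Finset.single_le_sum (f := fun j => ((k j : ℝ))^2)
      (fun j _ => sq_nonneg _) (Finset.mem_univ i))
  calc (1:ℝ) = Real.sqrt 1 := by simp
    _ ≤ normk k := Real.sqrt_le_sqrt h2

lemma coef_norm (e mm : ℝ) : ‖((e - 1) / mm : ℂ)‖ = |e - 1| / |mm| := by
  rw [norm_div]
  have h1 : ((e : ℂ) - 1) = ((e - 1 : ℝ) : ℂ) := by push_cast; ring
  rw [h1, Complex.norm_real, Complex.norm_real]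
  simp [Real.norm_eq_abs]

lemma coef_bounds {mm t : ℝ} (hmm : mm < 0) (ht : 0 < t) :
    ‖((Real.exp (mm * t) - 1) / mm : ℂ)‖ ≤ t ∧
    ‖((Real.exp (mm * t) - 1) / mm : ℂ)‖ ≤ 1 / |mm| := by
  have hmm0 : mm ≠ 0 := ne_of_lt hmm
  have habs : 0 < |mm| := abs_pos.mpr hmm0
  have hexp : Real.exp (mm * t) ≤ 1 := by
    rw [← Real.exp_zero]
    exact Real.exp_le_exp.mpr (by nlinarith)
  have hE : |Real.exp (mm * t) - 1| = 1 - Real.exp (mm * t) := by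
    rw [abs_sub_comm, abs_of_nonneg (by linarith)]
  rw [coef_norm, hE]
  constructor
  · rw [div_le_iff₀ habs]
    have h1 : mm * t + 1 ≤ Real.exp (mm * t) := Real.add_one_le_exp _
    have h2 : |mm| = -mm := abs_of_neg hmm
    nlinarith
  · gcongr
    have := Real.exp_pos (mm * t)
    linarith

/-- Theorem 4.1, spatial regularity with a source: for
`b ∈ H^s(Tⁿ)` with Fourier coefficients `a_k` and multipliers `m(ν_k) < 0`
(`k ≠ 0`) bounded away from `0` at large frequencies, the Duhamel coefficients
`((e^{m(ν_k)t}−1)/m(ν_k)) a_k` of `U(t) − b̂₀t` lie in `H^s`; if moreover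
`|m(ν_k)| ≥ C‖k‖^{β−n}` with `n < β`, they lie in `H^{s+β−n}`. -/
theorem source_spatial_regularity {n : ℕ} (s t : ℝ) (ht : 0 < t)
    (a : (Fin n → ℤ) → ℂ) (m : (Fin n → ℤ) → ℝ)
    (ha : Summable fun k => (1 + normk k ^ 2) ^ s * ‖a k‖ ^ 2)
    (hm : ∀ k, k ≠ 0 → m k < 0)
    (hlb : ∃ c > (0 : ℝ), ∃ R : ℝ, ∀ k, R ≤ normk k → c ≤ |m k|) :
    (Summable fun k => (1 + normk k ^ 2) ^ s *
        ‖if k = 0 then 0 else ((Real.exp (m k * t) - 1) / m k : ℂ) * a k‖ ^ 2) ∧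
    (∀ C β : ℝ, 0 < C → (n : ℝ) < β →
      (∀ k, k ≠ 0 → C * normk k ^ (β - (n : ℝ)) ≤ |m k|) →
      Summable fun k => (1 + normk k ^ 2) ^ (s + β - (n : ℝ)) *
        ‖if k = 0 then 0 else ((Real.exp (m k * t) - 1) / m k : ℂ) * a k‖ ^ 2) := by
  constructor
  · have hg : Summable fun k : Fin n → ℤ =>
        t ^ 2 * ((1 + normk k ^ 2) ^ s * ‖a k‖ ^ 2) := ha.mul_left _
    refine Summable.of_nonneg_of_le ?_ ?_ hg
    · intro k
      positivity
    · intro k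
      by_cases hk : k = 0
      · rw [if_pos hk, norm_zero]
        norm_num
        positivity
      · simp only [if_neg hk, norm_mul, mul_pow]
        have hb := (coef_bounds (hm k hk) ht).1
        have hw : (0:ℝ) ≤ (1 + normk k ^ 2) ^ s := by positivity
        have h2 : ‖((Real.exp (m k * t) - 1) / m k : ℂ)‖ ^ 2 ≤ t ^ 2 :=
          pow_le_pow_left₀ (norm_nonneg _) hb 2
        have h3 : ‖((Real.exp (m k * t) - 1) / m k : ℂ)‖ ^ 2 * ‖a k‖ ^ 2 ≤
            t ^ 2 * ‖a k‖ ^ 2 :=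
          mul_le_mul_of_nonneg_right h2 (sq_nonneg _)
        calc (1 + normk k ^ 2) ^ s *
              (‖((Real.exp (m k * t) - 1) / m k : ℂ)‖ ^ 2 * ‖a k‖ ^ 2)
            ≤ (1 + normk k ^ 2) ^ s * (t ^ 2 * ‖a k‖ ^ 2) :=
              mul_le_mul_of_nonneg_left h3 hw
          _ = t ^ 2 * ((1 + normk k ^ 2) ^ s * ‖a k‖ ^ 2) := by ring
  · intro C β hC hβ hCb
    have hg : Summable fun k : Fin n → ℤ =>
        (2 ^ (β - (n:ℝ)) / C ^ 2) * ((1 + normk k ^ 2) ^ s * ‖a k‖ ^ 2) := ha.mul_left _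
    refine Summable.of_nonneg_of_le ?_ ?_ hg
    · intro k
      positivity
    · intro k
      by_cases hk : k = 0
      · rw [if_pos hk, norm_zero]
        norm_num
        positivity
      · simp only [if_neg hk, norm_mul, mul_pow]
        set x := normk k with hx
        have hx1 : (1:ℝ) ≤ x := one_le_normk hk
        have hx0 : (0:ℝ) < x := lt_of_lt_of_le one_pos hx1
        have hβn : (0:ℝ) < β - n := by linarith
        have hxr : (0:ℝ) < x ^ (β - (n:ℝ)) := Real.rpow_pos_of_pos hx0 _
        have hb := (coef_bounds (hm k hk) ht).2
        have hmabs : C * x ^ (β - (n:ℝ)) ≤ |m k| := hCb k hk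
        have hcoef : ‖((Real.exp (m k * t) - 1) / m k : ℂ)‖ ≤ 1 / (C * x ^ (β - (n:ℝ))) := by
          refine hb.trans ?_
          exact one_div_le_one_div_of_le (by positivity) hmabs
        have hbase : (0:ℝ) < 1 + x ^ 2 := by positivity
        have hws : (1 + x ^ 2) ^ (s + β - (n:ℝ)) =
            (1 + x ^ 2) ^ s * (1 + x ^ 2) ^ (β - (n:ℝ)) := by
          rw [← Real.rpow_add hbase]
          congr 1
          ring
        have hwle : (1 + x ^ 2) ^ (β - (n:ℝ)) ≤ 2 ^ (β - (n:ℝ)) * (x ^ (β - (n:ℝ))) ^ 2 := by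
          have h1 : (1 + x ^ 2 : ℝ) ≤ 2 * x ^ 2 := by nlinarith
          have h2 : (1 + x ^ 2) ^ (β - (n:ℝ)) ≤ (2 * x ^ 2) ^ (β - (n:ℝ)) :=
            Real.rpow_le_rpow (le_of_lt hbase) h1 (le_of_lt hβn)
          refine h2.trans_eq ?_
          rw [Real.mul_rpow (by norm_num) (by positivity)]
          congr 1
          rw [← Real.rpow_natCast x 2, ← Real.rpow_natCast (x ^ (β - (n:ℝ))) 2,
            ← Real.rpow_mul (le_of_lt hx0), ← Real.rpow_mul (le_of_lt hx0)]
          norm_num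
          ring_nf
        have hcoef2 : ‖((Real.exp (m k * t) - 1) / m k : ℂ)‖ ^ 2 ≤
            (1 / (C * x ^ (β - (n:ℝ)))) ^ 2 :=
          pow_le_pow_left₀ (norm_nonneg _) hcoef 2
        have hws0 : (0:ℝ) ≤ (1 + x ^ 2) ^ s := by positivity
        have key : (1 + x ^ 2) ^ (β - (n:ℝ)) * ‖((Real.exp (m k * t) - 1) / m k : ℂ)‖ ^ 2 ≤
            2 ^ (β - (n:ℝ)) / C ^ 2 := by
          calc (1 + x ^ 2) ^ (β - (n:ℝ)) * ‖((Real.exp (m k * t) - 1) / m k : ℂ)‖ ^ 2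
              ≤ (2 ^ (β - (n:ℝ)) * (x ^ (β - (n:ℝ))) ^ 2) * (1 / (C * x ^ (β - (n:ℝ)))) ^ 2 :=
                mul_le_mul hwle hcoef2 (by positivity) (by positivity)
            _ = 2 ^ (β - (n:ℝ)) / C ^ 2 := by
                field_simp
        calc (1 + x ^ 2) ^ (s + β - (n:ℝ)) *
              (‖((Real.exp (m k * t) - 1) / m k : ℂ)‖ ^ 2 * ‖a k‖ ^ 2)
            = (1 + x ^ 2) ^ s * ((1 + x ^ 2) ^ (β - (n:ℝ)) *
              ‖((Real.exp (m k * t) - 1) / m k : ℂ)‖ ^ 2) * ‖a k‖ ^ 2 := by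
                rw [hws]; ring
          _ ≤ (1 + x ^ 2) ^ s * (2 ^ (β - (n:ℝ)) / C ^ 2) * ‖a k‖ ^ 2 := by
                exact mul_le_mul_of_nonneg_right
                  (mul_le_mul_of_nonneg_left key hws0) (sq_nonneg _)
          _ = 2 ^ (β - (n:ℝ)) / C ^ 2 * ((1 + x ^ 2) ^ s * ‖a k‖ ^ 2) := by ring
end
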